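/- In the concrete quasi-free CAR model: let l ∈ ℤ with λ_l ≠ 1/2 and let ξ ∈ H satisfy the l-th intertwining equations. Then for all finite subsets A, B ⊆ ℤ such that exactly one of the conditions l ∈ A, l ∈ B holds, one has ⟨e_{(A,B)}, ξ⟩ = 0. (The coefficient functions u₁₀ and u₀₁ in the l-decomposition of ξ vanish identically.) -/

import Mathlib

/- The concrete quasi-free CAR model: `H = ℓ²(Finset ℤ × Finset ℤ)` with orthonormal basis
`e (A, B)`, vacuum `Ω = e (∅, ∅)`, and operators `a l`, `b l`, `G` given on the basis by the
quasi-free formulas with symbol `λ` (diagonal, `R h_l = λ_l h_l`). -/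

noncomputable section

/-- The GNS Hilbert space: `ℓ²` over pairs of finite subsets of `ℤ`. -/
abbrev CARSpace := lp (fun _ : Finset ℤ × Finset ℤ => ℂ) 2

/-- The orthonormal basis vector `e_{(A,B)}`. -/
def carE (p : Finset ℤ × Finset ℤ) : CARSpace := lp.single 2 p 1

/-- The vacuum vector `Ω = e_{(∅,∅)}`. -/
def carΩ : CARSpace := carE (∅, ∅)

/-- `n(l, X)` = number of elements of `X` strictly below `l`. -/
def nlt (l : ℤ) (X : Finset ℤ) : ℕ := (X.filter fun j => j < l).card

/-- `a` is the family of quasi-free annihilation-type operators `a_l = π_R(a(h_l))`: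
`a_l e_{(A,B)} = √(1−λ_l)·(−1)^{|B|}·(−1)^{n(l,A)}·[l ∉ A]·e_{(A∪{l},B)}
              + √(λ_l)·(−1)^{n(l,B)}·[l ∈ B]·e_{(A,B∖{l})}`. -/
def IsCAR_a (lam : ℤ → ℝ) (a : ℤ → CARSpace →L[ℂ] CARSpace) : Prop :=
  ∀ (l : ℤ) (A B : Finset ℤ),
    a l (carE (A, B)) =
      ((Real.sqrt (1 - lam l) : ℂ) * (-1) ^ B.card * (-1) ^ nlt l A *
          (if l ∈ A then 0 else 1)) • carE (insert l A, B) +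
      ((Real.sqrt (lam l) : ℂ) * (-1) ^ nlt l B *
          (if l ∈ B then 1 else 0)) • carE (A, B.erase l)

/-- `b` is the family of commutant quasi-free operators:
`b_l e_{(A,B)} = √(λ_l)·(−1)^{|B|}·(−1)^{n(l,A)}·[l ∉ A]·e_{(A∪{l},B)}
              − √(1−λ_l)·(−1)^{n(l,B)}·[l ∈ B]·e_{(A,B∖{l})}`. -/
def IsCAR_b (lam : ℤ → ℝ) (b : ℤ → CARSpace →L[ℂ] CARSpace) : Prop :=
  ∀ (l : ℤ) (A B : Finset ℤ),
    b l (carE (A, B)) =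
      ((Real.sqrt (lam l) : ℂ) * (-1) ^ B.card * (-1) ^ nlt l A *
          (if l ∈ A then 0 else 1)) • carE (insert l A, B) -
      ((Real.sqrt (1 - lam l) : ℂ) * (-1) ^ nlt l B *
          (if l ∈ B then 1 else 0)) • carE (A, B.erase l)

/-- `G = Γ⊗Γ` : `G e_{(A,B)} = (−1)^{|A|+|B|} e_{(A,B)}`. -/
def IsCAR_G (G : CARSpace →L[ℂ] CARSpace) : Prop :=
  ∀ (A B : Finset ℤ), G (carE (A, B)) = ((-1 : ℂ) ^ (A.card + B.card)) • carE (A, B)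

/-- `ξ` satisfies the `l`-th intertwining equations:
`(1−λ_l)^{−1/2}·(a_l ξ) = −λ_l^{−1/2}·G(b_l ξ)` and
`λ_l^{−1/2}·(a_l* ξ) = −(1−λ_l)^{−1/2}·b_l*(G ξ)`. -/
def IntertwinesAt (lam : ℤ → ℝ) (a b : ℤ → CARSpace →L[ℂ] CARSpace)
    (G : CARSpace →L[ℂ] CARSpace) (l : ℤ) (ξ : CARSpace) : Prop :=
  (Real.sqrt (1 - lam l) : ℂ)⁻¹ • a l ξ = -((Real.sqrt (lam l) : ℂ)⁻¹) • G (b l ξ) ∧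
  (Real.sqrt (lam l) : ℂ)⁻¹ • (star (a l)) ξ =
    -((Real.sqrt (1 - lam l) : ℂ)⁻¹) • (star (b l)) (G ξ)

local notation "⟪" x ", " y "⟫" => @inner ℂ _ _ x y


/-! Pair both intertwining equations with `e (A, B)` where `l ∉ A ∪ B`. On the basis, `a l` and
`b l` send `e (A, B)` to multiples of `e (A ∪ {l}, B)` and their adjoints send it to multiples of
`e (A, B ∪ {l})`, with weights `(√(1-λ), √λ)` for `a` and `(√λ, -√(1-λ))` for `b`, while `G`
contributes only the sign `ε = (-1)^(|A|+|B|)`. The first equation thus reads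
`(λ - ε(1-λ)) ξ(A, B ∪ {l}) = 0` and the second `((1-λ) - ελ) ξ(A ∪ {l}, B) = 0` (up to
signs), and both coefficients are nonzero because `λ ≠ 1/2`. -/

lemma inner_carE (p : Finset ℤ × Finset ℤ) (x : CARSpace) : ⟪carE p, x⟫ = x p := by
  simp [carE, lp.inner_single_left]

lemma carE_apply (p q : Finset ℤ × Finset ℤ) : carE p q = if q = p then 1 else 0 := by
  simp [carE, lp.single_apply, Pi.single_apply]

lemma carE_ext {x y : CARSpace} (h : ∀ p, ⟪carE p, x⟫ = ⟪carE p, y⟫) : x = y :=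
  lp.ext <| funext fun p => by simpa only [inner_carE] using h p

lemma adjoint_apply_carE_eq {T : CARSpace →L[ℂ] CARSpace} {q : Finset ℤ × Finset ℤ}
    {v : CARSpace} (h : ∀ p, ⟪T (carE p), carE q⟫ = ⟪carE p, v⟫) :
    ContinuousLinearMap.adjoint T (carE q) = v :=
  carE_ext fun p => by rw [ContinuousLinearMap.adjoint_inner_right, h]

lemma nlt_insert_self (l : ℤ) (B : Finset ℤ) : nlt l (insert l B) = nlt l B := by
  rw [nlt, Finset.filter_insert, if_neg (lt_irrefl l), nlt]

lemma IsCAR_G.inner_carE_apply {G : CARSpace →L[ℂ] CARSpace} (hG : IsCAR_G G)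
    (A B : Finset ℤ) (x : CARSpace) :
    ⟪carE (A, B), G x⟫ = (-1) ^ (A.card + B.card) * ⟪carE (A, B), x⟫ := by
  have hGadj : ContinuousLinearMap.adjoint G (carE (A, B)) =
      ((-1 : ℂ) ^ (A.card + B.card)) • carE (A, B) := by
    refine adjoint_apply_carE_eq fun ⟨C, D⟩ => ?_
    rw [hG, inner_smul_left, inner_smul_right, inner_carE, carE_apply]
    split_ifs with h
    · obtain ⟨rfl, rfl⟩ := Prod.mk.inj h
      simp
    · simp
  rw [← ContinuousLinearMap.adjoint_inner_left, hGadj, inner_smul_left]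
  simp

def IsQuasiFreeModeOp (α β : ℝ) (l : ℤ) (T : CARSpace →L[ℂ] CARSpace) : Prop :=
  ∀ A B : Finset ℤ,
    T (carE (A, B)) =
      ((α : ℂ) * (-1) ^ B.card * (-1) ^ nlt l A * (if l ∈ A then 0 else 1)) •
          carE (insert l A, B) +
        ((β : ℂ) * (-1) ^ nlt l B * (if l ∈ B then 1 else 0)) • carE (A, B.erase l)

lemma IsCAR_a.isQuasiFreeModeOp {lam : ℤ → ℝ} {a : ℤ → CARSpace →L[ℂ] CARSpace} (ha : IsCAR_a lam a)
    (l : ℤ) : IsQuasiFreeModeOp √(1 - lam l) √(lam l) l (a l) :=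
  ha l

lemma IsCAR_b.isQuasiFreeModeOp {lam : ℤ → ℝ} {b : ℤ → CARSpace →L[ℂ] CARSpace} (hb : IsCAR_b lam b)
    (l : ℤ) : IsQuasiFreeModeOp √(lam l) (-√(1 - lam l)) l (b l) := fun A B => by
  simpa only [Complex.ofReal_neg, neg_mul, neg_smul, ← sub_eq_add_neg] using hb l A B

namespace IsQuasiFreeModeOp

variable {α β : ℝ} {l : ℤ} {T : CARSpace →L[ℂ] CARSpace} {A B : Finset ℤ}

lemma inner_apply_carE (hT : IsQuasiFreeModeOp α β l T) (hA : l ∉ A) (hB : l ∉ B) (x : CARSpace) :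
    ⟪T (carE (A, B)), x⟫ = α * (-1) ^ (B.card + nlt l A) * ⟪carE (insert l A, B), x⟫ := by
  simp [hT A B, hA, hB, pow_add]
  ring

lemma adjoint_apply_carE (hT : IsQuasiFreeModeOp α β l T) (hA : l ∉ A) (hB : l ∉ B) :
    ContinuousLinearMap.adjoint T (carE (A, B)) =
      ((β : ℂ) * (-1) ^ nlt l B) • carE (A, insert l B) := by
  refine adjoint_apply_carE_eq fun ⟨C, D⟩ => ?_
  simp only [hT C D, inner_add_left, inner_smul_left, inner_smul_right, inner_carE, carE_apply]
  by_cases h : (C, D) = (A, insert l B)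
  · obtain ⟨rfl, rfl⟩ := Prod.mk.inj h
    simp [hA, hB, nlt_insert_self]
  · have hC : insert l C ≠ A := fun hCA => hA (hCA ▸ Finset.mem_insert_self l C)
    have hD : ¬(l ∈ D ∧ C = A ∧ D.erase l = B) := by
      rintro ⟨hlD, rfl, rfl⟩
      exact h (by rw [Finset.insert_erase hlD])
    split_ifs <;> simp_all

lemma inner_carE_apply (hT : IsQuasiFreeModeOp α β l T) (hA : l ∉ A) (hB : l ∉ B) (x : CARSpace) :
    ⟪carE (A, B), T x⟫ = β * (-1) ^ nlt l B * ⟪carE (A, insert l B), x⟫ := by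
  rw [← ContinuousLinearMap.adjoint_inner_left, hT.adjoint_apply_carE hA hB, inner_smul_left]
  simp

end IsQuasiFreeModeOp

lemma eq_zero_of_sqrt_ratio_mul_eq_sign_mul {x y : ℝ} (hx : 0 < x) (hy : 0 < y) (hxy : x ≠ y)
    {n : ℕ} {z : ℂ}
    (h : ((√y : ℝ) : ℂ)⁻¹ * (√x : ℝ) * z = (-1) ^ n * (((√x : ℝ) : ℂ)⁻¹ * (√y : ℝ) * z)) :
    z = 0 := by
  have hsx : ((√x : ℝ) : ℂ) ≠ 0 := by exact_mod_cast (Real.sqrt_pos.2 hx).ne'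
  have hsy : ((√y : ℝ) : ℂ) ≠ 0 := by exact_mod_cast (Real.sqrt_pos.2 hy).ne'
  have hx2 : ((√x : ℝ) : ℂ) ^ 2 = x := by exact_mod_cast Real.sq_sqrt hx.le
  have hy2 : ((√y : ℝ) : ℂ) ^ 2 = y := by exact_mod_cast Real.sq_sqrt hy.le
  have hcoef : ((x : ℂ) - (-1) ^ n * y) ≠ 0 := by
    rcases neg_one_pow_eq_or ℂ n with hn | hn <;> rw [hn]
    · exact_mod_cast (by rwa [one_mul, sub_ne_zero] : x - 1 * y ≠ 0)
    · exact_mod_cast (by linarith : x - -1 * y ≠ 0)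
  have key : ((x : ℂ) - (-1) ^ n * y) * z = 0 := by
    field_simp at h
    linear_combination h + (-1) ^ n * z * hy2 - z * hx2
  exact (mul_eq_zero.1 key).resolve_left hcoef

namespace IntertwinesAt

variable {lam : ℤ → ℝ} {a b : ℤ → CARSpace →L[ℂ] CARSpace} {G : CARSpace →L[ℂ] CARSpace}
  {l : ℤ} {ξ : CARSpace} {A B : Finset ℤ}

lemma inner_carE_insert_right_eq_zero (hξ : IntertwinesAt lam a b G l ξ)
    (hlam : 0 < lam l ∧ lam l < 1) (hl : lam l ≠ 1 / 2)
    (ha : IsCAR_a lam a) (hb : IsCAR_b lam b) (hG : IsCAR_G G) (hA : l ∉ A) (hB : l ∉ B) :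
    ⟪carE (A, insert l B), ξ⟫ = 0 := by
  have h := congrArg (⟪carE (A, B), ·⟫) hξ.1
  simp only [inner_smul_right, hG.inner_carE_apply, (ha.isQuasiFreeModeOp l).inner_carE_apply hA hB,
    (hb.isQuasiFreeModeOp l).inner_carE_apply hA hB] at h
  have hz := eq_zero_of_sqrt_ratio_mul_eq_sign_mul (n := A.card + B.card)
    (z := (-1) ^ nlt l B * ⟪carE (A, insert l B), ξ⟫) hlam.1 (sub_pos.2 hlam.2)
    (by contrapose! hl; linarith) (by push_cast at h ⊢; linear_combination h)
  simpa using hz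

lemma inner_carE_insert_left_eq_zero (hξ : IntertwinesAt lam a b G l ξ)
    (hlam : 0 < lam l ∧ lam l < 1) (hl : lam l ≠ 1 / 2)
    (ha : IsCAR_a lam a) (hb : IsCAR_b lam b) (hG : IsCAR_G G) (hA : l ∉ A) (hB : l ∉ B) :
    ⟪carE (insert l A, B), ξ⟫ = 0 := by
  have h := congrArg (⟪carE (A, B), ·⟫) hξ.2
  simp only [inner_smul_right, ContinuousLinearMap.star_eq_adjoint,
    ContinuousLinearMap.adjoint_inner_right, (ha.isQuasiFreeModeOp l).inner_apply_carE hA hB,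
    (hb.isQuasiFreeModeOp l).inner_apply_carE hA hB, hG.inner_carE_apply,
    Finset.card_insert_of_notMem hA] at h
  have hz := eq_zero_of_sqrt_ratio_mul_eq_sign_mul (n := A.card + B.card)
    (z := (-1) ^ (B.card + nlt l A) * ⟪carE (insert l A, B), ξ⟫) (sub_pos.2 hlam.2) hlam.1
    (by contrapose! hl; linarith) (by linear_combination h)
  simpa using hz

end IntertwinesAt

/-- let `l ∈ ℤ` with `λ_l ≠ 1/2` and let `ξ ∈ H` satisfy the `l`-th
intertwining equations. Then for all finite `A, B ⊆ ℤ` such that exactly one of `l ∈ A`,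
`l ∈ B` holds, one has `⟨e_{(A,B)}, ξ⟩ = 0`. -/
theorem stmt13 (lam : ℤ → ℝ) (hlam : ∀ l, 0 < lam l ∧ lam l < 1)
    (a b : ℤ → CARSpace →L[ℂ] CARSpace) (G : CARSpace →L[ℂ] CARSpace)
    (ha : IsCAR_a lam a) (hb : IsCAR_b lam b) (hG : IsCAR_G G)
    (l : ℤ) (hl : lam l ≠ 1 / 2)
    (ξ : CARSpace) (hξ : IntertwinesAt lam a b G l ξ) :
    ∀ A B : Finset ℤ, Xor' (l ∈ A) (l ∈ B) → ⟪carE (A, B), ξ⟫ = 0 := by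
  rintro A B (⟨hA, hB⟩ | ⟨hB, hA⟩)
  · rw [← Finset.insert_erase hA]
    exact hξ.inner_carE_insert_left_eq_zero (hlam l) hl ha hb hG (Finset.notMem_erase l A) hB
  · rw [← Finset.insert_erase hB]
    exact hξ.inner_carE_insert_right_eq_zero (hlam l) hl ha hb hG hA (Finset.notMem_erase l B)

end
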